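/- arXiv:0801.2678 — 2 statements merged into one kernel-verified Lean document; each statement's English description precedes it below -/
import Mathlib

section
/- The function x ↦ cosh⁻²(x/√2) - 2 tanh²(x/√2) satisfies H f = 0, where H f = -f'' - 3 cosh⁻²(x/√2) f; moreover f is bounded on ℝ but not in L²(ℝ) (so 0 is a resonance, not an eigenvalue). -/
/-!
Writing `s = cosh⁻²(x/√2)`, the identity `tanh² = 1 - cosh⁻²` turns `f` into `3 s - 2`.
Since `(cosh⁻²)'' = 4 cosh⁻² - 6 cosh⁻⁴`, the rescaling by `1/√2` gives `f'' = 6 s - 9 s²`,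
which is exactly `-3 s f`. As `0 < s ≤ 1`, `f` takes values in `[-2, 1]`, and as `s → 0` at
infinity, `f → -2 ≠ 0`, which is incompatible with square integrability.
-/

open Real MeasureTheory Filter Topology

section Integrability

variable {E : Type*} [NormedAddCommGroup E]

theorem not_integrable_of_tendsto_atTop {g : ℝ → E} {L : E} (hg : Tendsto g atTop (𝓝 L))
    (hL : L ≠ 0) : ¬ Integrable g := by
  intro hint
  have hL' : 0 < ‖L‖ := norm_pos_iff.mpr hL
  obtain ⟨a, ha⟩ := eventually_atTop.mp
    (hg.norm.eventually (eventually_ge_nhds (half_lt_self hL')))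
  have hconst : IntegrableOn (fun _ : ℝ => ‖L‖ / 2) (Set.Ici a) :=
    hint.norm.integrableOn.mono' aestronglyMeasurable_const <|
      (ae_restrict_iff' measurableSet_Ici).mpr <| ae_of_all _ fun x hx => by
        simpa [abs_of_pos hL'] using ha x hx
  simp [integrableOn_const_iff, hL'.ne'] at hconst

theorem not_memLp_of_tendsto_atTop {g : ℝ → E} {L : E} {p : ENNReal} (hp0 : p ≠ 0)
    (hp : p ≠ ⊤) (hg : Tendsto g atTop (𝓝 L)) (hL : L ≠ 0) : ¬ MemLp g p volume := by
  intro hmem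
  refine not_integrable_of_tendsto_atTop (hg.norm.rpow_const (Or.inl (norm_ne_zero_iff.mpr hL)))
    ?_ (hmem.integrable_norm_rpow hp0 hp)
  exact (rpow_pos_of_pos (norm_pos_iff.mpr hL) _).ne'

end Integrability

namespace Real

theorem tanh_sq_add_inv_cosh_sq (x : ℝ) : tanh x ^ 2 + (cosh x)⁻¹ ^ 2 = 1 := by
  rw [tanh_eq_sinh_div_cosh]
  field_simp
  linear_combination -cosh_sq_sub_sinh_sq x

theorem inv_cosh_sq_le_one (x : ℝ) : (cosh x)⁻¹ ^ 2 ≤ 1 :=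
  pow_le_one₀ (inv_nonneg.mpr (cosh_pos x).le) (inv_le_one_of_one_le₀ (one_le_cosh x))

theorem tendsto_cosh_atTop : Tendsto cosh atTop atTop := by
  refine tendsto_atTop_mono (fun x => ?_) (tendsto_exp_atTop.atTop_div_const two_pos)
  rw [cosh_eq]
  gcongr
  linarith [exp_pos (-x)]

theorem tendsto_inv_cosh_sq_atTop : Tendsto (fun x => (cosh x)⁻¹ ^ 2) atTop (𝓝 0) := by
  simpa using (tendsto_inv_atTop_zero.comp tendsto_cosh_atTop).pow 2

theorem hasDerivAt_tanh (x : ℝ) : HasDerivAt tanh ((cosh x)⁻¹ ^ 2) x := by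
  have h := (hasDerivAt_sinh x).div (hasDerivAt_cosh x) (cosh_pos x).ne'
  rw [show tanh = sinh / cosh from funext tanh_eq_sinh_div_cosh]
  refine h.congr_deriv ?_
  field_simp
  linear_combination cosh_sq_sub_sinh_sq x

theorem hasDerivAt_inv_cosh_sq (x : ℝ) :
    HasDerivAt (fun x => (cosh x)⁻¹ ^ 2) (-2 * (cosh x)⁻¹ ^ 2 * tanh x) x := by
  refine (((hasDerivAt_cosh x).fun_inv (cosh_pos x).ne').fun_pow 2).congr_deriv ?_
  rw [tanh_eq_sinh_div_cosh]
  norm_num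
  field_simp

theorem deriv_inv_cosh_sq :
    deriv (fun x => (cosh x)⁻¹ ^ 2) = fun x => -2 * (cosh x)⁻¹ ^ 2 * tanh x :=
  funext fun x => (hasDerivAt_inv_cosh_sq x).deriv

theorem deriv_deriv_inv_cosh_sq (x : ℝ) :
    deriv (deriv fun x => (cosh x)⁻¹ ^ 2) x = 4 * (cosh x)⁻¹ ^ 2 - 6 * (cosh x)⁻¹ ^ 4 := by
  rw [deriv_inv_cosh_sq,
    (((hasDerivAt_inv_cosh_sq x).const_mul (-2)).fun_mul (hasDerivAt_tanh x)).deriv]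
  linear_combination (4 * (cosh x)⁻¹ ^ 2) * tanh_sq_add_inv_cosh_sq x

end Real

theorem deriv_deriv_comp_mul_left {𝕜 F : Type*} [NontriviallyNormedField 𝕜]
    [NormedAddCommGroup F] [NormedSpace 𝕜 F] (g : 𝕜 → F) (c x : 𝕜) :
    deriv (deriv fun x => g (c * x)) x = c ^ 2 • deriv (deriv g) (c * x) := by
  have hg' : deriv (fun x => g (c * x)) = fun x => c • deriv g (c * x) :=
    funext (deriv_comp_mul_left c g)
  rw [hg', deriv_fun_const_smul_field, deriv_comp_mul_left, smul_smul, sq]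

theorem deriv_deriv_const_mul_sub {𝕜 : Type*} [NontriviallyNormedField 𝕜] (a b : 𝕜)
    (h : 𝕜 → 𝕜) (x : 𝕜) : deriv (deriv fun x => a * h x - b) x = a * deriv (deriv h) x := by
  have h' : deriv (fun x => a * h x - b) = fun x => a * deriv h x :=
    funext fun x => by rw [deriv_sub_const, deriv_const_mul_field]
  rw [h', deriv_const_mul_field]

theorem kink_zero_resonance (f : ℝ → ℝ)
    (hf : ∀ x, f x = (Real.cosh (x / Real.sqrt 2))⁻¹ ^ 2
        - 2 * Real.tanh (x / Real.sqrt 2) ^ 2) :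
    (∀ x : ℝ,
      -(deriv (deriv f) x) - 3 * (Real.cosh (x / Real.sqrt 2))⁻¹ ^ 2 * f x = 0)
    ∧ (∃ C : ℝ, ∀ x : ℝ, |f x| ≤ C)
    ∧ ¬ MeasureTheory.MemLp f 2 (volume : Measure ℝ) := by
  have hf' : f = fun x => 3 * (cosh ((√2)⁻¹ * x))⁻¹ ^ 2 - 2 := funext fun x => by
    rw [hf, div_eq_inv_mul]
    linear_combination (-2) * tanh_sq_add_inv_cosh_sq ((√2)⁻¹ * x)
  refine ⟨fun x => ?_, ⟨2, fun x => ?_⟩, ?_⟩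
  · rw [hf', deriv_deriv_const_mul_sub, deriv_deriv_comp_mul_left (fun x => (cosh x)⁻¹ ^ 2),
      deriv_deriv_inv_cosh_sq, div_eq_inv_mul, smul_eq_mul, inv_pow, sq_sqrt zero_le_two]
    ring
  · have hs0 : 0 ≤ (cosh ((√2)⁻¹ * x))⁻¹ ^ 2 := by positivity
    have hs1 := inv_cosh_sq_le_one ((√2)⁻¹ * x)
    rw [hf', abs_le]
    constructor <;> linarith
  · refine hf' ▸ not_memLp_of_tendsto_atTop two_ne_zero ENNReal.ofNat_ne_top ?_
      (neg_ne_zero.mpr two_ne_zero)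
    simpa using ((tendsto_inv_cosh_sq_atTop.comp
      (tendsto_id.const_mul_atTop (by positivity))).const_mul 3).sub_const 2
end

section
/- Morawetz divergence identity: for smooth u(T,R,θ), with 𝒦 = T² cosh(R) ∂_T + T sinh(R) ∂_R and P = ∂_T² - (1/T²)(∂_R² + coth(R)∂_R + sinh⁻²(R)∂_θ²), one has sinh(R)·(𝒦u)·(Pu) = ∂_T 𝒫⁰ + ∂_R 𝒫¹ + ∂_θ 𝒫², where 𝒫⁰ = (1/2) sinh(R) cosh(R)[T²u_T² + 2T tanh(R) u_T u_R + u_R² + u_θ²/sinh²(R)], 𝒫¹ = (1/2)[-T u_T² - (2/tanh R) u_T u_R - u_R²/T + u_θ²/(T sinh²R)] sinh²(R), and 𝒫² = -T⁻¹ u_R u_θ - coth(R) u_T u_θ. -/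
open Real

noncomputable def dT (u : ℝ → ℝ → ℝ → ℝ) (T R θ : ℝ) : ℝ := deriv (fun s => u s R θ) T

noncomputable def dR (u : ℝ → ℝ → ℝ → ℝ) (T R θ : ℝ) : ℝ := deriv (fun s => u T s θ) R

noncomputable def dθ (u : ℝ → ℝ → ℝ → ℝ) (T R θ : ℝ) : ℝ := deriv (fun s => u T R s) θ

/-- Hyperbolic Laplacian (in the variables `(R, θ)`). -/
noncomputable def Δhyp (u : ℝ → ℝ → ℝ → ℝ) : ℝ → ℝ → ℝ → ℝ := fun T R θ =>
  dR (dR u) T R θ + (Real.cosh R / Real.sinh R) * dR u T R θ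
    + (Real.sinh R)⁻¹ ^ 2 * dθ (dθ u) T R θ

/-- The normalized wave operator `P = ∂_T² - T⁻² Δ_hyp`. -/
noncomputable def Pop (u : ℝ → ℝ → ℝ → ℝ) : ℝ → ℝ → ℝ → ℝ := fun T R θ =>
  dT (dT u) T R θ - (1 / T ^ 2) * Δhyp u T R θ

noncomputable def Pzero (u : ℝ → ℝ → ℝ → ℝ) : ℝ → ℝ → ℝ → ℝ := fun T R θ =>
  (1 / 2) * Real.sinh R * Real.cosh R *
    (T ^ 2 * dT u T R θ ^ 2 + 2 * T * Real.tanh R * dT u T R θ * dR u T R θ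
      + dR u T R θ ^ 2 + dθ u T R θ ^ 2 / Real.sinh R ^ 2)

noncomputable def Pone (u : ℝ → ℝ → ℝ → ℝ) : ℝ → ℝ → ℝ → ℝ := fun T R θ =>
  (1 / 2) * (-(T * dT u T R θ ^ 2) - (2 / Real.tanh R) * dT u T R θ * dR u T R θ
      - dR u T R θ ^ 2 / T + dθ u T R θ ^ 2 / (T * Real.sinh R ^ 2))
    * Real.sinh R ^ 2

noncomputable def Ptwo (u : ℝ → ℝ → ℝ → ℝ) : ℝ → ℝ → ℝ → ℝ := fun T R θ =>
  -(T⁻¹ * dR u T R θ * dθ u T R θ)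
    - (Real.cosh R / Real.sinh R) * dT u T R θ * dθ u T R θ

noncomputable def pd (v : ℝ × ℝ × ℝ) (F : ℝ × ℝ × ℝ → ℝ) (p : ℝ × ℝ × ℝ) : ℝ :=
  fderiv ℝ F p v

lemma contDiff_pd {F : ℝ × ℝ × ℝ → ℝ} (hF : ContDiff ℝ (⊤ : ℕ∞) F) (v : ℝ × ℝ × ℝ) :
    ContDiff ℝ (⊤ : ℕ∞) (pd v F) :=
  (hF.fderiv_right (by simp)).clm_apply contDiff_const

lemma hasDerivAt_slice1 {F : ℝ × ℝ × ℝ → ℝ} (hF : Differentiable ℝ F) (T R θ : ℝ) :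
    HasDerivAt (fun s => F (s, R, θ)) (pd (1, 0, 0) F (T, R, θ)) T := by
  have hg : HasDerivAt (fun s : ℝ => ((s, R, θ) : ℝ × ℝ × ℝ)) (1, 0, 0) T :=
    HasDerivAt.prodMk (hasDerivAt_id T) (hasDerivAt_const T (R, θ))
  exact ((hF (T, R, θ)).hasFDerivAt).comp_hasDerivAt T hg

lemma hasDerivAt_slice2 {F : ℝ × ℝ × ℝ → ℝ} (hF : Differentiable ℝ F) (T R θ : ℝ) :
    HasDerivAt (fun s => F (T, s, θ)) (pd (0, 1, 0) F (T, R, θ)) R := by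
  have hg : HasDerivAt (fun s : ℝ => ((T, s, θ) : ℝ × ℝ × ℝ)) (0, 1, 0) R :=
    HasDerivAt.prodMk (hasDerivAt_const R T) (HasDerivAt.prodMk (hasDerivAt_id R) (hasDerivAt_const R θ))
  exact ((hF (T, R, θ)).hasFDerivAt).comp_hasDerivAt R hg

lemma hasDerivAt_slice3 {F : ℝ × ℝ × ℝ → ℝ} (hF : Differentiable ℝ F) (T R θ : ℝ) :
    HasDerivAt (fun s => F (T, R, s)) (pd (0, 0, 1) F (T, R, θ)) θ := by
  have hg : HasDerivAt (fun s : ℝ => ((T, R, s) : ℝ × ℝ × ℝ)) (0, 0, 1) θ :=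
    HasDerivAt.prodMk (hasDerivAt_const θ T) (HasDerivAt.prodMk (hasDerivAt_const θ R) (hasDerivAt_id θ))
  exact ((hF (T, R, θ)).hasFDerivAt).comp_hasDerivAt θ hg

lemma pd_pd {F : ℝ × ℝ × ℝ → ℝ} (hF : ContDiff ℝ (⊤ : ℕ∞) F) (v w p : ℝ × ℝ × ℝ) :
    pd w (pd v F) p = fderiv ℝ (fderiv ℝ F) p w v := by
  have hdiff : DifferentiableAt ℝ (fderiv ℝ F) p :=
    ((hF.fderiv_right (m := (⊤ : ℕ∞)) (by simp)).differentiable (by simp)) p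
  have h := fderiv_clm_apply (c := fderiv ℝ F) (u := fun _ => v) hdiff (differentiableAt_const v)
  have h2 := congrArg (fun (L : (ℝ × ℝ × ℝ) →L[ℝ] ℝ) => L w) h
  simp only [ContinuousLinearMap.add_apply, ContinuousLinearMap.comp_apply,
    ContinuousLinearMap.flip_apply, fderiv_const, fderiv_const_apply, Pi.zero_apply,
    ContinuousLinearMap.zero_apply, map_zero, zero_add] at h2
  exact h2

lemma pd_comm {F : ℝ × ℝ × ℝ → ℝ} (hF : ContDiff ℝ (⊤ : ℕ∞) F) (v w p : ℝ × ℝ × ℝ) :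
    pd w (pd v F) p = pd v (pd w F) p := by
  rw [pd_pd hF, pd_pd hF]
  exact (hF.contDiffAt.isSymmSndFDerivAt (by rw [minSmoothness_of_isRCLikeNormedField]; exact WithTop.coe_le_coe.mpr le_top)) w v

theorem morawetz_divergence_identity (u : ℝ → ℝ → ℝ → ℝ)
    (hu : ContDiff ℝ (⊤ : ℕ∞) (fun p : ℝ × ℝ × ℝ => u p.1 p.2.1 p.2.2)) :
    ∀ T R θ : ℝ, 0 < T → 0 < R →
      Real.sinh R *
          (T ^ 2 * Real.cosh R * dT u T R θ + T * Real.sinh R * dR u T R θ) *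
          Pop u T R θ
        = dT (Pzero u) T R θ + dR (Pone u) T R θ + dθ (Ptwo u) T R θ := by
  intro T R θ hT hR
  set f : ℝ × ℝ × ℝ → ℝ := fun p => u p.1 p.2.1 p.2.2 with hfdef
  have hfd : Differentiable ℝ f := hu.differentiable (by simp)
  have hg1 : Differentiable ℝ (pd (1,0,0) f) := (contDiff_pd hu _).differentiable (by simp)
  have hg2 : Differentiable ℝ (pd (0,1,0) f) := (contDiff_pd hu _).differentiable (by simp)
  have hg3 : Differentiable ℝ (pd (0,0,1) f) := (contDiff_pd hu _).differentiable (by simp)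
  have hsh0 : Real.sinh R ≠ 0 := (Real.sinh_pos_iff.mpr hR).ne'
  have hch0 : Real.cosh R ≠ 0 := (Real.cosh_pos R).ne'
  have hT0 : T ≠ 0 := hT.ne'
  -- first partials
  have edT : ∀ a b c : ℝ, dT u a b c = pd (1,0,0) f (a,b,c) :=
    fun a b c => (hasDerivAt_slice1 hfd a b c).deriv
  have edR : ∀ a b c : ℝ, dR u a b c = pd (0,1,0) f (a,b,c) :=
    fun a b c => (hasDerivAt_slice2 hfd a b c).deriv
  have edθ : ∀ a b c : ℝ, dθ u a b c = pd (0,0,1) f (a,b,c) :=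
    fun a b c => (hasDerivAt_slice3 hfd a b c).deriv
  -- the nine directional derivatives of the partials
  have hA : HasDerivAt (fun s => dT u s R θ) (pd (1,0,0) (pd (1,0,0) f) (T,R,θ)) T := by
    rw [funext fun s => edT s R θ]; exact hasDerivAt_slice1 hg1 T R θ
  have hB : HasDerivAt (fun s => dR u s R θ) (pd (1,0,0) (pd (0,1,0) f) (T,R,θ)) T := by
    rw [funext fun s => edR s R θ]; exact hasDerivAt_slice1 hg2 T R θ
  have hC : HasDerivAt (fun s => dθ u s R θ) (pd (1,0,0) (pd (0,0,1) f) (T,R,θ)) T := by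
    rw [funext fun s => edθ s R θ]; exact hasDerivAt_slice1 hg3 T R θ
  have hA2 : HasDerivAt (fun s => dT u T s θ) (pd (0,1,0) (pd (1,0,0) f) (T,R,θ)) R := by
    rw [funext fun s => edT T s θ]; exact hasDerivAt_slice2 hg1 T R θ
  have hB2 : HasDerivAt (fun s => dR u T s θ) (pd (0,1,0) (pd (0,1,0) f) (T,R,θ)) R := by
    rw [funext fun s => edR T s θ]; exact hasDerivAt_slice2 hg2 T R θ
  have hC2 : HasDerivAt (fun s => dθ u T s θ) (pd (0,1,0) (pd (0,0,1) f) (T,R,θ)) R := by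
    rw [funext fun s => edθ T s θ]; exact hasDerivAt_slice2 hg3 T R θ
  have hA3 : HasDerivAt (fun s => dT u T R s) (pd (0,0,1) (pd (1,0,0) f) (T,R,θ)) θ := by
    rw [funext fun s => edT T R s]; exact hasDerivAt_slice3 hg1 T R θ
  have hB3 : HasDerivAt (fun s => dR u T R s) (pd (0,0,1) (pd (0,1,0) f) (T,R,θ)) θ := by
    rw [funext fun s => edR T R s]; exact hasDerivAt_slice3 hg2 T R θ
  have hC3 : HasDerivAt (fun s => dθ u T R s) (pd (0,0,1) (pd (0,0,1) f) (T,R,θ)) θ := by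
    rw [funext fun s => edθ T R s]; exact hasDerivAt_slice3 hg3 T R θ
  have eTT : dT (dT u) T R θ = pd (1,0,0) (pd (1,0,0) f) (T,R,θ) := hA.deriv
  have eRR : dR (dR u) T R θ = pd (0,1,0) (pd (0,1,0) f) (T,R,θ) := hB2.deriv
  have eθθ : dθ (dθ u) T R θ = pd (0,0,1) (pd (0,0,1) f) (T,R,θ) := hC3.deriv
  -- derivative of Pzero in T
  have hP0 := ((((hasDerivAt_pow 2 T).mul (hA.pow 2)).add
      (((((hasDerivAt_id T).const_mul 2).mul_const (Real.tanh R)).mul hA).mul hB)).add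
      (hB.pow 2)).add ((hC.pow 2).div_const (Real.sinh R ^ 2))
    |>.const_mul ((1 : ℝ) / 2 * Real.sinh R * Real.cosh R)
  have h0 : dT (Pzero u) T R θ = _ := hP0.deriv
  -- derivative of Pone in R
  have hq : HasDerivAt (fun s => 2 * Real.cosh s / Real.sinh s)
      ((2 * Real.sinh R * Real.sinh R - 2 * Real.cosh R * Real.cosh R) / Real.sinh R ^ 2) R :=
    ((Real.hasDerivAt_cosh R).const_mul 2).div (Real.hasDerivAt_sinh R) hsh0
  have hQ := ((((hA2.pow 2).const_mul T).neg.sub ((hq.mul hA2).mul hB2)).sub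
      ((hB2.pow 2).div_const T)).add
      ((hC2.pow 2).div (((Real.hasDerivAt_sinh R).pow 2).const_mul T)
        (mul_ne_zero hT0 (pow_ne_zero 2 hsh0)))
  have hP1big := (hQ.const_mul ((1 : ℝ)/2)).mul ((Real.hasDerivAt_sinh R).pow 2)
  have hP1 : HasDerivAt (fun s => Pone u T s θ) _ R :=
    hP1big.congr_of_eventuallyEq (Filter.Eventually.of_forall fun s => by
      simp only [Pone, Real.tanh_eq_sinh_div_cosh, div_div_eq_mul_div, Pi.mul_apply, Pi.pow_apply,
        Pi.sub_apply, Pi.neg_apply, Pi.add_apply, Pi.div_apply])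
  have h1 : dR (Pone u) T R θ = _ := hP1.deriv
  -- derivative of Ptwo in θ
  have hP2 := (((hB3.const_mul T⁻¹).mul hC3).neg).sub
      ((hA3.const_mul (Real.cosh R / Real.sinh R)).mul hC3)
  have h2 : dθ (Ptwo u) T R θ = _ := hP2.deriv
  -- mixed partials commute
  have c21 : pd (0,1,0) (pd (1,0,0) f) (T,R,θ) = pd (1,0,0) (pd (0,1,0) f) (T,R,θ) :=
    pd_comm hu _ _ _
  have c31 : pd (0,0,1) (pd (1,0,0) f) (T,R,θ) = pd (1,0,0) (pd (0,0,1) f) (T,R,θ) :=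
    pd_comm hu _ _ _
  have c32 : pd (0,0,1) (pd (0,1,0) f) (T,R,θ) = pd (0,1,0) (pd (0,0,1) f) (T,R,θ) :=
    pd_comm hu _ _ _
  rw [h0, h1, h2]
  simp only [Pop, Δhyp]
  simp only [Pi.mul_apply, Pi.pow_apply, Pi.sub_apply, Pi.neg_apply, Pi.add_apply, Pi.div_apply, id]
  rw [eTT, eRR, eθθ, edT T R θ, edR T R θ, edθ T R θ, c21, c31, c32,
    Real.tanh_eq_sinh_div_cosh]
  set a := pd (1,0,0) f (T,R,θ)
  set b := pd (0,1,0) f (T,R,θ)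
  set c := pd (0,0,1) f (T,R,θ)
  set att := pd (1,0,0) (pd (1,0,0) f) (T,R,θ)
  set atr := pd (1,0,0) (pd (0,1,0) f) (T,R,θ)
  set ath := pd (1,0,0) (pd (0,0,1) f) (T,R,θ)
  set arr := pd (0,1,0) (pd (0,1,0) f) (T,R,θ)
  set arh := pd (0,1,0) (pd (0,0,1) f) (T,R,θ)
  set ahh := pd (0,0,1) (pd (0,0,1) f) (T,R,θ)
  field_simp
  ring
end
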